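/- arXiv:2008.05071 — 2 statements merged into one kernel-verified Lean document; each statement's English description precedes it below -/
import Mathlib

section
/- Let α > 1 and let x ∈ ℝ^K be a nonzero vector satisfying |x_i| ≥ α|x_{i+1}| for all 1 ≤ i ≤ K−1 (an α-strongly-decaying vector). Then ‖x‖₁² ≤ φ(K)·‖x‖₂², where φ(K) = ((α^K − 1)(α + 1))/((α^K + 1)(α − 1)). -/
/-!
Write `r = α⁻¹` and `|x_{i+1}| = r^i c_i`; the decay condition says exactly that `c` is
nonincreasing. Cauchy–Schwarz with weights `r^i` gives
`(∑ r^i c_i)² ≤ (∑ r^i) · ∑ r^i c_i²`, and summation by parts against the weights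
`d_i = (1 + r^K) r^i - (1 + r) r^{2i}`, whose partial sums are `≤ 0` and whose total is `0`,
gives `(1 + r^K) ∑ r^i c_i² ≤ (1 + r) ∑ r^{2i} c_i²`. Both steps are equalities for constant `c`,
i.e. for the geometric sequence.
-/

open Finset

section OrderedRing

variable {R : Type*} [CommRing R] [LinearOrder R] [IsStrictOrderedRing R]

theorem sum_mul_le_mul_sum_of_partialSums_nonpos {v d : ℕ → R} {n : ℕ}
    (hv : ∀ i, i + 1 < n → v (i + 1) ≤ v i) (hd : ∀ m ≤ n, ∑ i ∈ range m, d i ≤ 0) :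
    ∑ i ∈ range n, v i * d i ≤ v (n - 1) * ∑ i ∈ range n, d i := by
  have hparts := sum_range_by_parts v d n
  simp only [smul_eq_mul] at hparts
  rw [hparts, sub_le_self_iff]
  refine sum_nonneg fun i hi => mul_nonneg_of_nonpos_of_nonpos ?_ (hd _ ?_)
  · rw [mem_range] at hi
    exact sub_nonpos.2 (hv i (by omega))
  · rw [mem_range] at hi
    omega

theorem one_sub_mul_sum_geom_sub_geom_sq (r : R) (K m : ℕ) :
    (1 - r) * ∑ i ∈ range m, ((1 + r ^ K) * r ^ i - (1 + r) * (r ^ i) ^ 2)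
      = (1 - r ^ m) * (r ^ K - r ^ m) := by
  simp only [sum_sub_distrib, ← mul_sum, pow_right_comm _ _ 2]
  linear_combination (1 + r ^ K) * mul_neg_geom_sum r m - mul_neg_geom_sum (r ^ 2) m

theorem one_add_pow_mul_sum_le_of_antitone {r : R} (hr₀ : 0 ≤ r) (hr₁ : r < 1) {v : ℕ → R}
    {K : ℕ} (hv : ∀ i, i + 1 < K → v (i + 1) ≤ v i) :
    (1 + r ^ K) * ∑ i ∈ range K, r ^ i * v i
      ≤ (1 + r) * ∑ i ∈ range K, (r ^ i) ^ 2 * v i := by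
  set d : ℕ → R := fun i => (1 + r ^ K) * r ^ i - (1 + r) * (r ^ i) ^ 2
  have hpartial : ∀ m ≤ K, ∑ i ∈ range m, d i ≤ 0 := fun m hm => by
    refine nonpos_of_mul_nonpos_right ?_ (sub_pos.2 hr₁)
    rw [one_sub_mul_sum_geom_sub_geom_sq]
    exact mul_nonpos_of_nonneg_of_nonpos (sub_nonneg.2 (pow_le_one₀ hr₀ hr₁.le))
      (sub_nonpos.2 (pow_le_pow_of_le_one hr₀ hr₁.le hm))
  have htotal : ∑ i ∈ range K, d i = 0 := by
    have h := one_sub_mul_sum_geom_sub_geom_sq r K K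
    rw [sub_self, mul_zero] at h
    exact (mul_eq_zero.1 h).resolve_left (sub_pos.2 hr₁).ne'
  have hexpand : ∑ i ∈ range K, v i * d i = (1 + r ^ K) * ∑ i ∈ range K, r ^ i * v i
      - (1 + r) * ∑ i ∈ range K, (r ^ i) ^ 2 * v i := by
    simp only [d, mul_sum, ← sum_sub_distrib]
    exact sum_congr rfl fun i _ => by ring
  have habel := sum_mul_le_mul_sum_of_partialSums_nonpos hv hpartial
  rw [htotal, mul_zero, hexpand] at habel
  exact sub_nonpos.1 habel

end OrderedRing

section OrderedField

variable {𝕜 : Type*} [Field 𝕜] [LinearOrder 𝕜] [IsStrictOrderedRing 𝕜]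

theorem sq_sum_pow_mul_le_of_antitone {r : 𝕜} (hr₀ : 0 ≤ r) (hr₁ : r < 1) {c : ℕ → 𝕜} {K : ℕ}
    (hc₀ : ∀ i, 0 ≤ c i) (hc : ∀ i, i + 1 < K → c (i + 1) ≤ c i) :
    (∑ i ∈ range K, r ^ i * c i) ^ 2
      ≤ (1 - r ^ K) * (1 + r) / ((1 - r) * (1 + r ^ K)) * ∑ i ∈ range K, (r ^ i * c i) ^ 2 := by
  have hcs : (∑ i ∈ range K, r ^ i * c i) ^ 2
      ≤ (∑ i ∈ range K, r ^ i) * ∑ i ∈ range K, r ^ i * c i ^ 2 :=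
    sum_sq_le_sum_mul_sum_of_sq_le_mul _ (fun i _ => by positivity) (fun i _ => by positivity)
      fun i _ => le_of_eq (by ring)
  have hsq : ∀ i, i + 1 < K → c (i + 1) ^ 2 ≤ c i ^ 2 := fun i hi =>
    pow_le_pow_left₀ (hc₀ _) (hc i hi) 2
  have hweights := one_add_pow_mul_sum_le_of_antitone hr₀ hr₁ (v := fun i => c i ^ 2) hsq
  have hgeom : ∑ i ∈ range K, r ^ i = (1 - r ^ K) / (1 - r) :=
    eq_div_of_mul_eq (sub_pos.2 hr₁).ne' (by rw [mul_comm, mul_neg_geom_sum])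
  calc (∑ i ∈ range K, r ^ i * c i) ^ 2
      ≤ (∑ i ∈ range K, r ^ i) * ∑ i ∈ range K, r ^ i * c i ^ 2 := hcs
    _ ≤ (∑ i ∈ range K, r ^ i) * ((1 + r) / (1 + r ^ K) * ∑ i ∈ range K, (r ^ i * c i) ^ 2) := by
      gcongr
      rw [div_mul_eq_mul_div, le_div_iff₀ (by positivity), mul_comm]
      simpa only [mul_pow] using hweights
    _ = _ := by rw [hgeom, ← mul_assoc, div_mul_div_comm]

theorem sq_sum_le_of_strongly_decaying {α : 𝕜} (hα : 1 < α) {b : ℕ → 𝕜} {K : ℕ}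
    (hb₀ : ∀ i, 0 ≤ b i) (hb : ∀ i, i + 1 < K → α * b (i + 1) ≤ b i) :
    (∑ i ∈ range K, b i) ^ 2
      ≤ (α ^ K - 1) * (α + 1) / ((α ^ K + 1) * (α - 1)) * ∑ i ∈ range K, b i ^ 2 := by
  have hα₀ : 0 < α := zero_lt_one.trans hα
  have hb_eq : ∀ i, b i = α⁻¹ ^ i * (α ^ i * b i) := fun i => by
    rw [← mul_assoc, ← mul_pow, inv_mul_cancel₀ hα₀.ne', one_pow, one_mul]
  have hφ : (α ^ K - 1) * (α + 1) / ((α ^ K + 1) * (α - 1))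
      = (1 - α⁻¹ ^ K) * (1 + α⁻¹) / ((1 - α⁻¹) * (1 + α⁻¹ ^ K)) := by
    have : α - 1 ≠ 0 := (sub_pos.2 hα).ne'
    rw [inv_pow]
    field_simp
  have key := sq_sum_pow_mul_le_of_antitone (inv_nonneg.2 hα₀.le) (inv_lt_one_of_one_lt₀ hα)
    (c := fun i => α ^ i * b i) (fun i => mul_nonneg (by positivity) (hb₀ i)) fun i hi => by
      rw [pow_succ, mul_assoc]
      exact mul_le_mul_of_nonneg_left (hb i hi) (by positivity)
  simp only [← hb_eq] at key
  rwa [hφ]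

end OrderedField

theorem strongly_decaying_l1_sq_le_general (α : ℝ) (hα : 1 < α) (K : ℕ)
    (x : ℕ → ℝ)
    (hdec : ∀ i, 1 ≤ i → i ≤ K - 1 → |x i| ≥ α * |x (i + 1)|) :
    (∑ i ∈ Finset.Icc 1 K, |x i|) ^ 2
      ≤ ((α ^ K - 1) * (α + 1)) / ((α ^ K + 1) * (α - 1))
          * ∑ i ∈ Finset.Icc 1 K, (x i) ^ 2 := by
  have hIcc : ∀ f : ℕ → ℝ, ∑ i ∈ Icc 1 K, f i = ∑ i ∈ range K, f (i + 1) := fun f => by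
    rw [← Ico_add_one_right_eq_Icc, sum_Ico_eq_sum_range, add_tsub_cancel_right]
    simp only [add_comm]
  rw [hIcc, hIcc]
  simp only [← sq_abs (x _)]
  exact sq_sum_le_of_strongly_decaying hα (fun i => abs_nonneg _)
    fun i hi => hdec (i + 1) (by omega) (by omega)

theorem strongly_decaying_l1_sq_le (α : ℝ) (hα : 1 < α) (K : ℕ) (hK : 1 ≤ K)
    (x : ℕ → ℝ) (hne : ∃ i ∈ Finset.Icc 1 K, x i ≠ 0)
    (hdec : ∀ i, 1 ≤ i → i ≤ K - 1 → |x i| ≥ α * |x (i + 1)|) :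
    (∑ i ∈ Finset.Icc 1 K, |x i|) ^ 2
      ≤ ((α ^ K - 1) * (α + 1)) / ((α ^ K + 1) * (α - 1))
          * ∑ i ∈ Finset.Icc 1 K, (x i) ^ 2 :=
  strongly_decaying_l1_sq_le_general α hα K x hdec
end

section
/- For every positive integer n, n! satisfies √(2π)·n^{n+1/2}·e^{−n}·e^{1/(12n+1)} < n! < √(2π)·n^{n+1/2}·e^{−n}·e^{1/(12n)}. -/
/-!
With `sₙ = n! / (√(2n) (n/e)ⁿ)`, which tends to `√π`, the series expansion of `log (1 + 1/n)`
gives `log sₙ - log sₙ₊₁ = ∑_{k ≥ 1} r^k / (2k + 1)` with `r = (2n + 1)⁻²`. Bounding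
`1 / (2k + 1)` by `1/3` sums the series to at most `1/(12n) - 1/(12(n+1))`, strictly from `k = 2`
on, while its first term alone exceeds `1/(12n+1) - 1/(12(n+1)+1)`. Hence `log sₙ - 1/(12n)`
increases strictly and `log sₙ - 1/(12n+1)` decreases strictly, both to `log √π`.
-/

open Real Filter Topology Nat Stirling

section
variable {α : Type*} [AddCommGroup α] [LinearOrder α] [IsOrderedAddMonoid α] [TopologicalSpace α]
  [OrderTopology α] [IsTopologicalAddGroup α] {f g : ℕ → α} {L : α}

theorem lt_add_of_tendsto_of_sub_succ_lt (hf : Tendsto f atTop (𝓝 L))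
    (hg : Tendsto g atTop (𝓝 0)) (h : ∀ n, f n - f (n + 1) < g n - g (n + 1)) (n : ℕ) :
    f n < L + g n := by
  have hmono : StrictMono fun n => f n - g n := strictMono_nat_of_lt_succ fun k => by
    simpa only [sub_lt_sub_iff, add_comm] using h k
  have hlim : Tendsto (fun n => f n - g n) atTop (𝓝 L) := by simpa using hf.sub hg
  exact sub_lt_iff_lt_add.mp <|
    (hmono n.lt_succ_self).trans_le (hmono.monotone.ge_of_tendsto hlim (n + 1))

theorem add_lt_of_tendsto_of_lt_sub_succ (hf : Tendsto f atTop (𝓝 L))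
    (hg : Tendsto g atTop (𝓝 0)) (h : ∀ n, g n - g (n + 1) < f n - f (n + 1)) (n : ℕ) :
    L + g n < f n := by
  have := lt_add_of_tendsto_of_sub_succ_lt hf.neg (neg_zero (G := α) ▸ hg.neg)
    (fun k => by simpa only [neg_sub_neg, sub_lt_sub_iff, add_comm] using h k) n
  rwa [← neg_add, neg_lt_neg_iff] at this

end

theorem hasSum_one_div_two_mul_add_one_sq_pow_succ_div_three (x : ℝ) (hx : 0 < x) :
    HasSum (fun k : ℕ => ((1 / (2 * x + 1)) ^ 2) ^ (k + 1) / 3)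
      (1 / (12 * x) - 1 / (12 * (x + 1))) := by
  set r := (1 / (2 * x + 1)) ^ 2 with hr
  have hr0 : 0 ≤ r := by positivity
  have hr1 : r < 1 := by
    rw [hr, div_pow, one_pow, div_lt_one (by positivity)]; nlinarith
  have hsum : 1 / (12 * x) - 1 / (12 * (x + 1)) = (1 - r)⁻¹ * r / 3 := by
    rw [hr, div_pow, one_pow, one_sub_div (by positivity), inv_div,
      show (2 * x + 1) ^ 2 - 1 = 4 * x * (x + 1) by ring]
    field_simp
    ring
  clear_value r
  rw [hsum]
  simpa only [pow_succ] using ((hasSum_geometric_of_lt_one hr0 hr1).mul_right r).div_const 3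

theorem log_stirlingSeq_sub_log_stirlingSeq_succ_lt {n : ℕ} (hn : n ≠ 0) :
    log (stirlingSeq n) - log (stirlingSeq (n + 1)) < 1 / (12 * n) - 1 / (12 * (n + 1)) := by
  obtain ⟨m, rfl⟩ := exists_eq_add_one_of_ne_zero hn
  refine hasSum_lt (i := 1) (fun k => ?_) ?_ (log_stirlingSeq_sdiff_hasSum m)
    (hasSum_one_div_two_mul_add_one_sq_pow_succ_div_three _ (by positivity))
  · rw [div_eq_inv_mul _ 3, ← one_div]
    gcongr
    push_cast
    linarith [k.cast_nonneg (α := ℝ)]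
  · rw [div_eq_inv_mul _ 3, ← one_div]
    gcongr
    norm_num

theorem lt_log_stirlingSeq_sub_log_stirlingSeq_succ {n : ℕ} (hn : n ≠ 0) :
    1 / (12 * n + 1) - 1 / (12 * (n + 1) + 1) <
      log (stirlingSeq n) - log (stirlingSeq (n + 1)) := by
  obtain ⟨m, rfl⟩ := exists_eq_add_one_of_ne_zero hn
  refine lt_of_lt_of_le ?_ (le_hasSum (log_stirlingSeq_sdiff_hasSum m) 0 fun k _ => by positivity)
  have hx : (1 : ℝ) ≤ ((m + 1 : ℕ) : ℝ) := by exact_mod_cast m.succ_pos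
  generalize ((m + 1 : ℕ) : ℝ) = x at hx ⊢
  calc 1 / (12 * x + 1) - 1 / (12 * (x + 1) + 1) = 12 / ((12 * x + 1) * (12 * x + 13)) := by
        field_simp; ring
    _ < 1 / (3 * (2 * x + 1) ^ 2) := by
        -- `(12x + 1)(12x + 13) - 36(2x + 1)² = 24x - 23`
        rw [div_lt_div_iff₀ (by positivity) (by positivity)]; nlinarith
    _ = _ := by norm_num [mul_comm]

theorem tendsto_log_stirlingSeq_succ :
    Tendsto (fun n => log (stirlingSeq (n + 1))) atTop (𝓝 (log √π)) :=
  (tendsto_stirlingSeq_sqrt_pi.comp (tendsto_add_atTop_nat 1)).log (by positivity)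

theorem tendsto_one_div_twelve_mul_succ_add (c : ℝ) :
    Tendsto (fun n : ℕ => 1 / (12 * ((n + 1 : ℕ) : ℝ) + c)) atTop (𝓝 0) := by
  have h := (tendsto_natCast_atTop_atTop (R := ℝ)).comp (tendsto_add_atTop_nat 1)
  have h12 := tendsto_atTop_add_const_right _ c (h.const_mul_atTop (by norm_num : (0 : ℝ) < 12))
  simpa only [one_div, Function.comp_def, Pi.inv_def] using h12.inv_tendsto_atTop

theorem stirlingSeq_lt_sqrt_pi_mul_exp {n : ℕ} (hn : n ≠ 0) :
    stirlingSeq n < √π * exp (1 / (12 * n)) := by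
  obtain ⟨m, rfl⟩ := exists_eq_add_one_of_ne_zero hn
  have hlog := lt_add_of_tendsto_of_sub_succ_lt tendsto_log_stirlingSeq_succ
    (by simpa only [add_zero] using tendsto_one_div_twelve_mul_succ_add 0)
    (fun k => by simpa using log_stirlingSeq_sub_log_stirlingSeq_succ_lt k.succ_ne_zero) m
  rwa [← exp_lt_exp, exp_log (stirlingSeq'_pos m), exp_add, exp_log (by positivity)] at hlog

theorem sqrt_pi_mul_exp_lt_stirlingSeq {n : ℕ} (hn : n ≠ 0) :
    √π * exp (1 / (12 * n + 1)) < stirlingSeq n := by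
  obtain ⟨m, rfl⟩ := exists_eq_add_one_of_ne_zero hn
  have hlog := add_lt_of_tendsto_of_lt_sub_succ tendsto_log_stirlingSeq_succ
    (tendsto_one_div_twelve_mul_succ_add 1)
    (fun k => by simpa using lt_log_stirlingSeq_sub_log_stirlingSeq_succ k.succ_ne_zero) m
  rwa [← exp_lt_exp, exp_log (stirlingSeq'_pos m), exp_add, exp_log (by positivity)] at hlog

theorem sqrt_two_pi_mul_rpow_mul_exp_neg (n : ℕ) :
    √(2 * π) * (n : ℝ) ^ ((n : ℝ) + 1 / 2) * exp (-(n : ℝ)) =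
      √π * (√(2 * n) * (n / exp 1) ^ n) := by
  rw [rpow_add' n.cast_nonneg (by positivity), rpow_natCast, ← sqrt_eq_rpow,
    sqrt_mul zero_le_two π, sqrt_mul zero_le_two (n : ℝ), div_pow, ← exp_nat_mul, mul_one, exp_neg]
  ring

theorem robbins_stirling (n : ℕ) (hn : 0 < n) :
    Real.sqrt (2 * Real.pi) * (n : ℝ) ^ ((n : ℝ) + 1 / 2) * Real.exp (-(n : ℝ))
        * Real.exp (1 / (12 * (n : ℝ) + 1)) < (n.factorial : ℝ) ∧
    (n.factorial : ℝ) < Real.sqrt (2 * Real.pi) * (n : ℝ) ^ ((n : ℝ) + 1 / 2)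
        * Real.exp (-(n : ℝ)) * Real.exp (1 / (12 * (n : ℝ))) := by
  have hD : 0 < √(2 * n) * (n / exp 1) ^ n := by positivity
  have hfact : (n ! : ℝ) = stirlingSeq n * (√(2 * n) * (n / exp 1) ^ n) :=
    (div_mul_cancel₀ _ hD.ne').symm
  rw [sqrt_two_pi_mul_rpow_mul_exp_neg, hfact, mul_right_comm _ _ (exp _),
    mul_right_comm _ _ (exp _)]
  exact ⟨mul_lt_mul_of_pos_right (sqrt_pi_mul_exp_lt_stirlingSeq hn.ne') hD,
    mul_lt_mul_of_pos_right (stirlingSeq_lt_sqrt_pi_mul_exp hn.ne') hD⟩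
end
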